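/- arXiv:2509.24920 — 3 statements merged into one kernel-verified Lean document; each statement's English description precedes it below -/
import Mathlib

section
/- For complex numbers z₁ = r₁·exp(i·θ₁) and z₂ = r₂·exp(i·θ₂) with r₁, r₂ > 0, θ₁, θ₂ ∈ ℝ and |θ₁ − θ₂| ≤ π, the squared Euclidean distance between the polar-coordinate vectors satisfies (r₁ − r₂)² + (θ₁ − θ₂)² ≤ (1 + π²/(4·r₁·r₂))·|z₁ − z₂|². -/
/-!
Writing `Δ = θ₁ - θ₂`, the law of cosines gives
`‖z₁ - z₂‖² = (r₁ - r₂)² + 4 r₁ r₂ sin² (Δ / 2)`, and Jordan's inequality `|sin t| ≥ 2 |t| / π`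
on `|t| ≤ π / 2` bounds `Δ²` by `π² sin² (Δ / 2) = π² / (4 r₁ r₂) · 4 r₁ r₂ sin² (Δ / 2)`.
-/

open Real

theorem Complex.norm_ofReal_mul_exp_sub_sq (r₁ r₂ θ₁ θ₂ : ℝ) :
    ‖(r₁ : ℂ) * Complex.exp (θ₁ * Complex.I) - r₂ * Complex.exp (θ₂ * Complex.I)‖ ^ 2 =
      (r₁ - r₂) ^ 2 + 4 * r₁ * r₂ * Real.sin ((θ₁ - θ₂) / 2) ^ 2 := by
  rw [Complex.sq_norm, Complex.normSq_apply]
  simp only [Complex.sub_re, Complex.sub_im, Complex.mul_re, Complex.mul_im,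
    Complex.ofReal_re, Complex.ofReal_im, Complex.exp_ofReal_mul_I_re,
    Complex.exp_ofReal_mul_I_im, zero_mul, sub_zero, add_zero]
  have hcos : Real.cos θ₁ * Real.cos θ₂ + Real.sin θ₁ * Real.sin θ₂ =
      1 - 2 * Real.sin ((θ₁ - θ₂) / 2) ^ 2 := by
    rw [← Real.cos_sub, Real.sin_sq_eq_half_sub]
    ring_nf
  linear_combination r₁ ^ 2 * Real.sin_sq_add_cos_sq θ₁ + r₂ ^ 2 * Real.sin_sq_add_cos_sq θ₂ -
    2 * r₁ * r₂ * hcos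

theorem Real.abs_le_pi_mul_abs_sin_half {x : ℝ} (hx : |x| ≤ π) : |x| ≤ π * |sin (x / 2)| := by
  have hjordan : 2 / π * |x / 2| ≤ |sin (x / 2)| :=
    mul_abs_le_abs_sin (by rw [abs_div, abs_two]; linarith)
  rwa [abs_div, abs_two, div_mul_div_cancel₀' two_ne_zero, div_le_iff₀' pi_pos] at hjordan

theorem Real.sq_le_pi_sq_mul_sin_half_sq {x : ℝ} (hx : |x| ≤ π) :
    x ^ 2 ≤ π ^ 2 * sin (x / 2) ^ 2 := by
  rw [← sq_abs x, ← sq_abs (sin (x / 2)), ← mul_pow]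
  exact pow_le_pow_left₀ (abs_nonneg x) (abs_le_pi_mul_abs_sin_half hx) 2

/-- For complex numbers `z₁ = r₁·exp(i·θ₁)` and `z₂ = r₂·exp(i·θ₂)` with `r₁, r₂ > 0` and
`|θ₁ − θ₂| ≤ π`, the squared Euclidean distance between the polar-coordinate vectors satisfies
`(r₁ − r₂)² + (θ₁ − θ₂)² ≤ (1 + π²/(4·r₁·r₂))·|z₁ − z₂|²`. -/
theorem polar_coord_dist_le (r₁ r₂ θ₁ θ₂ : ℝ) (hr₁ : 0 < r₁) (hr₂ : 0 < r₂)
    (hθ : |θ₁ - θ₂| ≤ Real.pi)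
    (z₁ z₂ : ℂ) (hz₁ : z₁ = (r₁ : ℂ) * Complex.exp (θ₁ * Complex.I))
    (hz₂ : z₂ = (r₂ : ℂ) * Complex.exp (θ₂ * Complex.I)) :
    (r₁ - r₂) ^ 2 + (θ₁ - θ₂) ^ 2 ≤
      (1 + Real.pi ^ 2 / (4 * r₁ * r₂)) * ‖z₁ - z₂‖ ^ 2 := by
  subst hz₁ hz₂
  rw [Complex.norm_ofReal_mul_exp_sub_sq]
  set s := sin ((θ₁ - θ₂) / 2) ^ 2
  have hr : 0 < 4 * r₁ * r₂ := by positivity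
  have hc : 0 ≤ π ^ 2 / (4 * r₁ * r₂) := by positivity
  calc (r₁ - r₂) ^ 2 + (θ₁ - θ₂) ^ 2
      ≤ (r₁ - r₂) ^ 2 + π ^ 2 / (4 * r₁ * r₂) * (4 * r₁ * r₂ * s) := by
        rw [← mul_assoc, div_mul_cancel₀ _ hr.ne']
        linarith [sq_le_pi_sq_mul_sin_half_sq hθ]
    _ ≤ (1 + π ^ 2 / (4 * r₁ * r₂)) * ((r₁ - r₂) ^ 2 + 4 * r₁ * r₂ * s) := by
        have hB : 0 ≤ 4 * r₁ * r₂ * s := mul_nonneg hr.le (sq_nonneg _)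
        nlinarith [mul_nonneg hc (sq_nonneg (r₁ - r₂))]
end

section
/- Let K ∈ ℂ^{n×n} be a Hermitian positive semidefinite matrix, β ∈ ℂ^{n×r} such that β*Kβ is invertible, and α̂ ∈ ℂ^{n×r}. Define Proj(α̂) = α̂ − β·((α̂*Kβ − I)·(β*Kβ)^{-1})*. Then for every α ∈ ℂ^{n×r} with α*Kβ = I, one has Re Tr((Proj(α̂) − α̂)*·K·(Proj(α̂) − α̂)) ≤ Re Tr((α − α̂)*·K·(α − α̂)); that is, Proj(α̂) minimizes the objective Tr((α − α̂)*K(α − α̂)) over the constraint set {α : α*Kβ = I}. -/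
open Matrix ComplexOrder

lemma trace_re_nonneg_of_psd {m : Type*} [Fintype m] {M : Matrix m m ℂ}
    (hM : M.PosSemidef) : 0 ≤ M.trace.re := by
  classical
  have h : ∀ i, 0 ≤ (M i i).re := fun i => by
    have := hM.re_dotProduct_nonneg (Pi.single i 1)
    simpa [dotProduct, mulVec, Pi.single_apply, Finset.sum_ite_eq] using this
  rw [Matrix.trace, Complex.re_sum]
  exact Finset.sum_nonneg fun i _ => h i

/-- For Hermitian PSD `K`, `β` with `βᴴKβ` invertible, and arbitrary `α̂`, the projection
`Proj(α̂) = α̂ − β·((α̂ᴴKβ − I)·(βᴴKβ)⁻¹)ᴴ` minimizes `Re Tr((α − α̂)ᴴ K (α − α̂))` over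
the constraint set `{α : αᴴKβ = I}`. -/
theorem proj_is_minimizer (n r : ℕ)
    (K : Matrix (Fin n) (Fin n) ℂ) (hK : K.PosSemidef)
    (β : Matrix (Fin n) (Fin r) ℂ) (hβ : IsUnit (βᴴ * K * β))
    (αhat : Matrix (Fin n) (Fin r) ℂ) :
    ∀ α : Matrix (Fin n) (Fin r) ℂ, αᴴ * K * β = 1 →
      (Matrix.trace
        (((αhat - β * ((αhatᴴ * K * β - 1) * (βᴴ * K * β)⁻¹)ᴴ) - αhat)ᴴ * K *
          ((αhat - β * ((αhatᴴ * K * β - 1) * (βᴴ * K * β)⁻¹)ᴴ) - αhat))).re ≤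
      (Matrix.trace ((α - αhat)ᴴ * K * (α - αhat))).re := by
  intro α hα
  set M : Matrix (Fin r) (Fin r) ℂ := (αhatᴴ * K * β - 1) * (βᴴ * K * β)⁻¹ with hM
  set Proj : Matrix (Fin n) (Fin r) ℂ := αhat - β * Mᴴ with hProj
  set E : Matrix (Fin n) (Fin r) ℂ := α - Proj with hEdef
  set P : Matrix (Fin n) (Fin r) ℂ := Proj - αhat with hPdef
  have hBinv : (βᴴ * K * β)⁻¹ * (βᴴ * K * β) = 1 :=
    Matrix.nonsing_inv_mul _ ((Matrix.isUnit_iff_isUnit_det _).mp hβ)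
  have hProjKβ : Projᴴ * K * β = 1 := by
    have hMB : M * (βᴴ * K * β) = αhatᴴ * K * β - 1 := by
      rw [hM, Matrix.mul_assoc, hBinv, Matrix.mul_one]
    have h2 : Projᴴ = αhatᴴ - M * βᴴ := by
      simp [hProj, conjTranspose_sub, conjTranspose_mul]
    rw [h2, Matrix.sub_mul, Matrix.sub_mul, Matrix.mul_assoc M βᴴ K,
      Matrix.mul_assoc M (βᴴ * K) β, hMB, sub_sub_cancel]
  have hE : Eᴴ * K * β = 0 := by
    simp only [hEdef, conjTranspose_sub, Matrix.sub_mul, hα, hProjKβ, sub_self]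
  have hEKP : Eᴴ * K * P = 0 := by
    have : P = -(β * Mᴴ) := by simp [hPdef, hProj]
    rw [this, Matrix.mul_neg, ← Matrix.mul_assoc, hE]
    simp
  have hPKE : Pᴴ * K * E = 0 := by
    have : Pᴴ * K * E = (Eᴴ * Kᴴ * P)ᴴ := by
      simp only [conjTranspose_mul, conjTranspose_conjTranspose, Matrix.mul_assoc]
    rw [this, hK.isHermitian.eq, hEKP]
    simp
  have hsplit : (α - αhat)ᴴ * K * (α - αhat) = Eᴴ * K * E + Pᴴ * K * P := by
    have hD : α - αhat = E + P := by simp [hEdef, hPdef]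
    rw [hD, conjTranspose_add, Matrix.add_mul, Matrix.add_mul, Matrix.mul_add, Matrix.mul_add,
      hEKP, hPKE]
    abel
  have hpsd : (Eᴴ * K * E).PosSemidef := hK.conjTranspose_mul_mul_same E
  have hnn : 0 ≤ (Matrix.trace (Eᴴ * K * E)).re := trace_re_nonneg_of_psd hpsd
  have : (Matrix.trace ((α - αhat)ᴴ * K * (α - αhat))).re
      = (Matrix.trace (Eᴴ * K * E)).re + (Matrix.trace (Pᴴ * K * P)).re := by
    rw [hsplit, Matrix.trace_add, Complex.add_re]
  rw [this]
  have hgoal : ((αhat - β * Mᴴ) - αhat) = P := by simp [hPdef, hProj]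
  calc (Matrix.trace (((αhat - β * Mᴴ) - αhat)ᴴ * K * ((αhat - β * Mᴴ) - αhat))).re
      = (Matrix.trace (Pᴴ * K * P)).re := by rw [hgoal]
    _ ≤ (Matrix.trace (Eᴴ * K * E)).re + (Matrix.trace (Pᴴ * K * P)).re := le_add_of_nonneg_left hnn
end

section
/- Let E and F be normed vector spaces over ℂ, let r ∈ ℕ, and let (T_n) be a sequence of continuous linear maps from E to F, each of whose range has dimension at most r, converging in operator norm to a continuous linear map T. Then the range of T also has dimension at most r. -/
/-! Rank is lower semicontinuous in operator norm: if `f x₁, …, f xₙ` are linearly independent,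
then so are `g x₁, …, g xₙ` for every `g` close enough to `f`, since linear independence of a
finite family is an open condition and `g ↦ (g xᵢ)ᵢ` is continuous. Hence `{f | rank f ≤ r}`,
the complement of `{f | r + 1 ≤ rank f}`, is closed. -/

open Filter

namespace ContinuousLinearMap

variable {𝕜 E F : Type*} [NontriviallyNormedField 𝕜] [CompleteSpace 𝕜]
  [SeminormedAddCommGroup E] [NormedSpace 𝕜 E] [NormedAddCommGroup F] [NormedSpace 𝕜 F]

theorem isOpen_setOf_natCast_le_rank (n : ℕ) :
    IsOpen {f : E →L[𝕜] F | (n : Cardinal) ≤ (f : E →ₗ[𝕜] F).rank} := by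
  refine isOpen_iff_mem_nhds.2 fun f hf => ?_
  obtain ⟨s, hcard, hli⟩ := LinearMap.le_rank_iff_exists_linearIndependent_finset.1 hf
  have hcont : Continuous fun g : E →L[𝕜] F => fun x : (s : Set E) => g x :=
    continuous_pi fun x => (apply 𝕜 F (x : E)).continuous
  filter_upwards [hcont.continuousAt.eventually hli.eventually] with g hg
  exact LinearMap.le_rank_iff_exists_linearIndependent_finset.2 ⟨s, hcard, hg⟩

theorem isClosed_setOf_rank_le (r : ℕ) :
    IsClosed {f : E →L[𝕜] F | (f : E →ₗ[𝕜] F).rank ≤ r} := by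
  convert (isOpen_setOf_natCast_le_rank (𝕜 := 𝕜) (E := E) (F := F) (r + 1)).isClosed_compl
  ext f
  rw [Set.mem_compl_iff, Set.mem_ofPred_eq, Set.mem_ofPred_eq, not_le, Nat.cast_add_one,
    Cardinal.lt_natCast_add_one_iff]

end ContinuousLinearMap

/-- If a sequence of bounded operators between complex normed spaces, each of rank at most `r`,
converges in operator norm to `S`, then `S` also has rank at most `r`: the set of bounded
operators of rank at most `r` is closed in operator norm. -/
theorem rank_le_of_tendsto {E F : Type*}
    [NormedAddCommGroup E] [NormedSpace ℂ E] [NormedAddCommGroup F] [NormedSpace ℂ F]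
    (r : ℕ) (T : ℕ → E →L[ℂ] F)
    (hrank : ∀ n, Module.rank ℂ (LinearMap.range (T n : E →ₗ[ℂ] F)) ≤ r)
    (S : E →L[ℂ] F)
    (hconv : Filter.Tendsto T Filter.atTop (nhds S)) :
    Module.rank ℂ (LinearMap.range (S : E →ₗ[ℂ] F)) ≤ r :=
  (ContinuousLinearMap.isClosed_setOf_rank_le r).mem_of_tendsto hconv (Eventually.of_forall hrank)
end
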